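/- arXiv:1804.03524 — 2 statements merged into one kernel-verified Lean document; each statement's English description precedes it below -/
import Mathlib

section
/- In a full coset relation algebra, the atom R_{xy,α} satisfies R_{xy,α} ⊗ (R_{xy,α})⁻¹ = R_{xy,α} ∘ (R_{xy,α})⁻¹ = ⋃{R_{xx,g} : g ∈ H_{xy}}, where the union is over singleton-coset atoms of G_x × G_x indexed by elements of the subgroup H_{xy}. -/
/-!
Both sides reduce to the relation "same left `H_{xy}`-coset". A pair `(a, c)` lies in
`R_{xy,α} ∘ R_{xy,α}⁻¹` iff `φ(aH)·φ(α) = φ(cH)·φ(α)`, i.e. `aH = cH` since `φ` is injective,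
i.e. `a⁻¹c ∈ H`. For the shifted product, `K_{xy,φα} ∘ K_{xy,φα⁻¹}` is the trivial coset
`K_{xy}`, whose `φ`-preimage is `H_{xy}`, and `H_{xy} ∘ C_{xyx} = H_{xy} ∘ H_{xy} = H_{xy}`.
-/

open scoped Pointwise

def cosetSet {G : Type*} [Group G] (H : Subgroup G) (q : G ⧸ H) : Set G :=
  {g | (QuotientGroup.mk g : G ⧸ H) = q}

/-- The atom `R_{xy,α}` of the full coset relation algebra. -/
def cosetRel {Gx Gy : Type*} [Group Gx] [Group Gy] (H : Subgroup Gx) [H.Normal]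
    (K : Subgroup Gy) [K.Normal] (φ : (Gx ⧸ H) ≃* (Gy ⧸ K)) (α : Gx ⧸ H) :
    Set (Gx × Gy) :=
  ⋃ γ : Gx ⧸ H, cosetSet H γ ×ˢ (cosetSet K (φ γ) * cosetSet K (φ α))

/-- Since `H_{xx} = {e_x}`, the atoms of `G_x × G_x` are indexed by group elements `g`:
`R_{xx,g} = {(u, u·g) : u ∈ G_x}`. -/
def cosetRelxx {Gx : Type*} [Group Gx] (g : Gx) : Set (Gx × Gx) :=
  {p | p.2 = p.1 * g}

def relComp {A B C : Type*} (R : Set (A × B)) (S : Set (B × C)) : Set (A × C) :=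
  {p | ∃ v, (p.1, v) ∈ R ∧ (v, p.2) ∈ S}

def preimSet {Gx Gy : Type*} [Group Gx] [Group Gy] {H : Subgroup Gx} [H.Normal]
    {K : Subgroup Gy} [K.Normal] (φ : (Gx ⧸ H) ≃* (Gy ⧸ K)) (T : Set Gy) : Set Gx :=
  {g | ∃ t ∈ T, φ (QuotientGroup.mk g) = (QuotientGroup.mk t : Gy ⧸ K)}

/-- The shifted product `R_{xy,α} ⊗ R_{yx,δ}`, where the atoms over the pair `(y,x)` are
indexed (via the convention `H_{yx,γ} = K_{xy,γ}`) by elements `δ : G_y ⧸ K_{xy}`, and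
where the shifting coset satisfies `C_{xyx} = H_{xy}`:
`⊗` is the union of those atoms `R_{xx,g}` with
`g ∈ φ_{xy}⁻¹[K_{xy,α} ∘ H_{yx,δ}] ∘ C_{xyx}`. -/
def otimesXYX {Gx Gy : Type*} [Group Gx] [Group Gy] (Hxy : Subgroup Gx) [Hxy.Normal]
    (Kxy : Subgroup Gy) [Kxy.Normal] (φ : (Gx ⧸ Hxy) ≃* (Gy ⧸ Kxy))
    (α : Gx ⧸ Hxy) (δ : Gy ⧸ Kxy) : Set (Gx × Gx) :=
  ⋃ g ∈ preimSet φ (cosetSet Kxy (φ α) * cosetSet Kxy δ) * (Hxy : Set Gx),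
    cosetRelxx g

section

variable {G : Type*} [Group G]

lemma cosetSet_one (H : Subgroup G) [H.Normal] : cosetSet H 1 = (H : Set G) := by
  ext g
  simp only [cosetSet, Set.mem_ofPred_eq, SetLike.mem_coe, QuotientGroup.eq_one_iff]

lemma mem_cosetSet_mul_cosetSet (K : Subgroup G) [K.Normal] (a b : G ⧸ K) (g : G) :
    g ∈ cosetSet K a * cosetSet K b ↔ (g : G ⧸ K) = a * b := by
  constructor
  · rintro ⟨u, rfl, v, rfl, rfl⟩
    rfl
  · intro h
    obtain ⟨u, rfl⟩ := QuotientGroup.mk_surjective a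
    refine ⟨u, rfl, u⁻¹ * g, ?_, mul_inv_cancel_left u g⟩
    simp only [cosetSet, Set.mem_ofPred_eq, QuotientGroup.mk_mul, QuotientGroup.mk_inv, h,
      inv_mul_cancel_left]

lemma iUnion_cosetRelxx_subgroup (H : Subgroup G) :
    ⋃ g ∈ (H : Set G), cosetRelxx g = {p : G × G | (p.1 : G ⧸ H) = p.2} := by
  ext ⟨a, c⟩
  simp only [cosetRelxx, Set.mem_iUnion, Set.mem_ofPred_eq, SetLike.mem_coe, QuotientGroup.eq,
    exists_prop]
  constructor
  · rintro ⟨g, hg, rfl⟩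
    rwa [inv_mul_cancel_left]
  · intro h
    exact ⟨a⁻¹ * c, h, (mul_inv_cancel_left a c).symm⟩

end

section

variable {Gx Gy : Type*} [Group Gx] [Group Gy] {H : Subgroup Gx} [H.Normal]
  {K : Subgroup Gy} [K.Normal] (φ : (Gx ⧸ H) ≃* (Gy ⧸ K))

lemma mem_cosetRel (α : Gx ⧸ H) (p : Gx × Gy) :
    p ∈ cosetRel H K φ α ↔ (p.2 : Gy ⧸ K) = φ p.1 * φ α := by
  simp only [cosetRel, Set.mem_iUnion, Set.mem_prod, mem_cosetSet_mul_cosetSet]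
  constructor
  · rintro ⟨γ, rfl, h⟩
    exact h
  · exact fun h ↦ ⟨p.1, rfl, h⟩

lemma preimSet_cosetSet_mul_cosetSet (a b : Gy ⧸ K) :
    preimSet φ (cosetSet K a * cosetSet K b) = cosetSet H (φ.symm (a * b)) := by
  ext g
  simp only [preimSet, Set.mem_ofPred_eq, mem_cosetSet_mul_cosetSet]
  simp only [cosetSet, Set.mem_ofPred_eq, MulEquiv.eq_symm_apply]
  constructor
  · rintro ⟨t, ht, hφ⟩
    rw [hφ, ht]
  · intro h
    obtain ⟨t, ht⟩ := QuotientGroup.mk_surjective (a * b)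
    exact ⟨t, ht, h.trans ht.symm⟩

lemma relComp_cosetRel_converse (α : Gx ⧸ H) :
    relComp (cosetRel H K φ α) (Prod.swap ⁻¹' cosetRel H K φ α) =
      {p : Gx × Gx | (p.1 : Gx ⧸ H) = p.2} := by
  ext ⟨a, c⟩
  simp only [relComp, Set.mem_ofPred_eq, Set.mem_preimage, Prod.swap, mem_cosetRel]
  constructor
  · rintro ⟨v, ha, hc⟩
    exact φ.injective (mul_right_cancel (ha.symm.trans hc))
  · intro h
    obtain ⟨v, hv⟩ := QuotientGroup.mk_surjective (φ a * φ α)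
    exact ⟨v, hv, by rw [hv, h]⟩

end

/-- Lemma: `R_{xy,α} ⊗ (R_{xy,α})⁻¹ = R_{xy,α} ∘ (R_{xy,α})⁻¹ = ⋃ {R_{xx,g} : g ∈ H_{xy}}`,
the converse of `R_{xy,α}` being the atom `R_{yx,δ}` with `δ` the index corresponding to
the coset of inverses, `δ = φ(α⁻¹)`. -/
theorem atom_otimes_converse_eq_comp_eq_union
    {Gx Gy : Type*} [Group Gx] [Group Gy] (Hxy : Subgroup Gx) [Hxy.Normal]
    (Kxy : Subgroup Gy) [Kxy.Normal] (φ : (Gx ⧸ Hxy) ≃* (Gy ⧸ Kxy)) (α : Gx ⧸ Hxy) :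
    otimesXYX Hxy Kxy φ α (φ α⁻¹) =
        relComp (cosetRel Hxy Kxy φ α) (Prod.swap ⁻¹' (cosetRel Hxy Kxy φ α)) ∧
    relComp (cosetRel Hxy Kxy φ α) (Prod.swap ⁻¹' (cosetRel Hxy Kxy φ α)) =
        ⋃ g ∈ (Hxy : Set Gx), cosetRelxx g := by
  have hcomp : relComp (cosetRel Hxy Kxy φ α) (Prod.swap ⁻¹' (cosetRel Hxy Kxy φ α)) =
      ⋃ g ∈ (Hxy : Set Gx), cosetRelxx g := by
    rw [relComp_cosetRel_converse, iUnion_cosetRelxx_subgroup]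
  have hshift : preimSet φ (cosetSet Kxy (φ α) * cosetSet Kxy (φ α⁻¹)) = (Hxy : Set Gx) := by
    rw [preimSet_cosetSet_mul_cosetSet, ← map_mul, mul_inv_cancel, map_one,
      MulEquiv.map_one, cosetSet_one]
  refine ⟨?_, hcomp⟩
  rw [hcomp, otimesXYX, hshift, coe_mul_coe]
end

section
/- In a full coset relation algebra with groups G_x, G_y, G_z (pairs (x,y), (y,z), (x,z) all in the quotient isomorphism index set), (G_x × G_y) ⊗ (G_y × G_z) = (G_x × G_y) ∘ (G_y × G_z) = G_x × G_z; that is, the shifted product of the two full rectangles agrees with their relational composition. -/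
open scoped Pointwise

/-- The shifted product `R_{xy,α} ⊗ R_{yz,β}` of atoms, determined by the shifting coset
`C = C_{xyz}` (a coset of `H_{xy} ∘ H_{xz}` in `G_x`). -/
def otimesAtom {Gx Gy Gz : Type*} [Group Gx] [Group Gy] [Group Gz]
    (Hxy : Subgroup Gx) [Hxy.Normal] (Kxy : Subgroup Gy) [Kxy.Normal]
    (Hyz : Subgroup Gy) [Hyz.Normal]
    (Hxz : Subgroup Gx) [Hxz.Normal] (Kxz : Subgroup Gz) [Kxz.Normal]
    (φxy : (Gx ⧸ Hxy) ≃* (Gy ⧸ Kxy)) (φxz : (Gx ⧸ Hxz) ≃* (Gz ⧸ Kxz))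
    (C : Set Gx) (α : Gx ⧸ Hxy) (β : Gy ⧸ Hyz) : Set (Gx × Gz) :=
  ⋃ γ ∈ {γ : Gx ⧸ Hxz |
      cosetSet Hxz γ ⊆ preimSet φxy (cosetSet Kxy (φxy α) * cosetSet Hyz β) * C},
    cosetRel Hxz Kxz φxz γ

section Cosets

variable {G : Type*} [Group G]

@[simp]
theorem mem_cosetSet {H : Subgroup G} {q : G ⧸ H} {g : G} :
    g ∈ cosetSet H q ↔ (g : G ⧸ H) = q :=
  Iff.rfl

theorem cosetSet_mul_cosetSet (N : Subgroup G) [N.Normal] (p q : G ⧸ N) :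
    cosetSet N p * cosetSet N q = cosetSet N (p * q) := by
  ext g
  simp only [Set.mem_mul, mem_cosetSet]
  constructor
  · rintro ⟨x, rfl, y, rfl, rfl⟩
    rfl
  · intro hg
    refine ⟨p.out, QuotientGroup.out_eq' p, p.out⁻¹ * g, ?_, mul_inv_cancel_left _ _⟩
    rw [QuotientGroup.mk_mul, QuotientGroup.mk_inv, QuotientGroup.out_eq', hg, inv_mul_cancel_left]

theorem cosetSet_subset_cosetSet_mul (H N : Subgroup G) (g c : G) :
    cosetSet N g ⊆ cosetSet H ↑(g * c⁻¹) * ({c} * ((H : Set G) * (N : Set G))) := by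
  intro x hx
  have hgx : g⁻¹ * x ∈ N := QuotientGroup.eq.1 hx.symm
  refine Set.mem_mul.2 ⟨g * c⁻¹, rfl, c * (1 * (g⁻¹ * x)), ?_, by group⟩
  exact Set.mul_mem_mul rfl (Set.mul_mem_mul H.one_mem hgx)

end Cosets

section Relations

variable {Gx Gy : Type*} [Group Gx] [Group Gy] {H : Subgroup Gx} [H.Normal]
  {K : Subgroup Gy} [K.Normal]

theorem mem_cosetRel_iff (φ : (Gx ⧸ H) ≃* (Gy ⧸ K)) (α : Gx ⧸ H) (a : Gx) (b : Gy) :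
    (a, b) ∈ cosetRel H K φ α ↔ (b : Gy ⧸ K) = φ a * φ α := by
  simp only [cosetRel, cosetSet_mul_cosetSet, ← map_mul, Set.mem_iUnion, Set.mem_prod,
    mem_cosetSet]
  exact ⟨fun ⟨_, rfl, hb⟩ => hb, fun hb => ⟨a, rfl, hb⟩⟩

theorem cosetSet_subset_preimSet_mul (φ : (Gx ⧸ H) ≃* (Gy ⧸ K)) (α : Gx ⧸ H) {T : Set Gy}
    (hT : (1 : Gy) ∈ T) : cosetSet H α ⊆ preimSet φ (cosetSet K (φ α) * T) := by
  intro g hg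
  refine ⟨(φ α).out, Set.subset_mul_left _ hT (QuotientGroup.out_eq' (φ α)), ?_⟩
  rw [hg, QuotientGroup.out_eq']

theorem relComp_univ_univ {A B C : Type*} [Nonempty B] :
    relComp (Set.univ : Set (A × B)) (Set.univ : Set (B × C)) = Set.univ :=
  Set.eq_univ_of_forall fun _ => ⟨Classical.arbitrary B, trivial, trivial⟩

end Relations

theorem rectangle_otimes_eq_comp_general
    {Gx Gy Gz : Type*} [Group Gx] [Group Gy] [Group Gz]
    (Hxy : Subgroup Gx) [Hxy.Normal] (Kxy : Subgroup Gy) [Kxy.Normal]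
    (Hyz : Subgroup Gy) [Hyz.Normal]
    (Hxz : Subgroup Gx) [Hxz.Normal] (Kxz : Subgroup Gz) [Kxz.Normal]
    (φxy : (Gx ⧸ Hxy) ≃* (Gy ⧸ Kxy))
    (φxz : (Gx ⧸ Hxz) ≃* (Gz ⧸ Kxz))
    (C : Set Gx) (hC : ∃ c : Gx, C = {c} * ((Hxy : Set Gx) * (Hxz : Set Gx))) :
    (⋃ (α : Gx ⧸ Hxy) (β : Gy ⧸ Hyz),
        otimesAtom Hxy Kxy Hyz Hxz Kxz φxy φxz C α β) =
      relComp (Set.univ : Set (Gx × Gy)) (Set.univ : Set (Gy × Gz)) ∧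
    relComp (Set.univ : Set (Gx × Gy)) (Set.univ : Set (Gy × Gz)) =
      (Set.univ : Set (Gx × Gz)) := by
  obtain ⟨c, rfl⟩ := hC
  refine ⟨?_, relComp_univ_univ⟩
  rw [relComp_univ_univ]
  refine Set.eq_univ_of_forall fun ⟨a, b⟩ => ?_
  -- `(a, b)` lies in the atom `R_{xz,γ}` for this `γ`; a representative `g` of `γ` then
  -- picks the atom `α` that covers it.
  set γ : Gx ⧸ Hxz := φxz.symm ((φxz a)⁻¹ * b)
  set g : Gx := γ.out
  have hγ : cosetSet Hxz γ ⊆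
      preimSet φxy (cosetSet Kxy (φxy ↑(g * c⁻¹)) * cosetSet Hyz 1) *
        ({c} * ((Hxy : Set Gx) * (Hxz : Set Gx))) :=
    calc cosetSet Hxz γ = cosetSet Hxz g := by rw [QuotientGroup.out_eq']
      _ ⊆ _ := cosetSet_subset_cosetSet_mul Hxy Hxz g c
      _ ⊆ _ := Set.mul_subset_mul_right <|
          cosetSet_subset_preimSet_mul φxy _ (QuotientGroup.mk_one Hyz)
  have hab : (a, b) ∈ cosetRel Hxz Kxz φxz γ := by
    rw [mem_cosetRel_iff, MulEquiv.apply_symm_apply, mul_inv_cancel_left]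
  exact Set.mem_iUnion₂.2 ⟨↑(g * c⁻¹), 1, Set.mem_iUnion₂.2 ⟨γ, hγ, hab⟩⟩

/-- `(G_x × G_y) ⊗ (G_y × G_z) = (G_x × G_y) ∘ (G_y × G_z) = G_x × G_z`: the shifted
product of the two full rectangles (obtained by complete additivity from the atoms that
partition them) agrees with their relational composition, which is the full rectangle
`G_x × G_z`.  (The full rectangles are `Set.univ` since each group is a whole type.) -/
theorem rectangle_otimes_eq_comp
    {Gx Gy Gz : Type*} [Group Gx] [Group Gy] [Group Gz]
    (Hxy : Subgroup Gx) [Hxy.Normal] (Kxy : Subgroup Gy) [Kxy.Normal]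
    (Hyz : Subgroup Gy) [Hyz.Normal] (Kyz : Subgroup Gz) [Kyz.Normal]
    (Hxz : Subgroup Gx) [Hxz.Normal] (Kxz : Subgroup Gz) [Kxz.Normal]
    (φxy : (Gx ⧸ Hxy) ≃* (Gy ⧸ Kxy)) (φyz : (Gy ⧸ Hyz) ≃* (Gz ⧸ Kyz))
    (φxz : (Gx ⧸ Hxz) ≃* (Gz ⧸ Kxz))
    (C : Set Gx) (hC : ∃ c : Gx, C = {c} * ((Hxy : Set Gx) * (Hxz : Set Gx))) :
    (⋃ (α : Gx ⧸ Hxy) (β : Gy ⧸ Hyz),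
        otimesAtom Hxy Kxy Hyz Hxz Kxz φxy φxz C α β) =
      relComp (Set.univ : Set (Gx × Gy)) (Set.univ : Set (Gy × Gz)) ∧
    relComp (Set.univ : Set (Gx × Gy)) (Set.univ : Set (Gy × Gz)) =
      (Set.univ : Set (Gx × Gz)) :=
  rectangle_otimes_eq_comp_general Hxy Kxy Hyz Hxz Kxz φxy φxz C hC
end
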